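/- Let D and E be finite distributive lattices and let φ : D → E be a 0,1-lattice homomorphism. Then: (1) φ is a homomorphism of Heyting algebras (i.e., preserves relative pseudocomplements) if and only if for all p ∈ Ji(D) and q ∈ Ji(E), p ≤ q^φ implies that there exists x ∈ Ji(E) with x ≤ q and x^φ = p; (2) φ is closed if and only if for all p ∈ Ji(D) and q ∈ Ji(E), q^φ ≤ p implies that there exists x ∈ Ji(E) with q ≤ x and x^φ = p. -/

import Mathlib

/-!
Both equivalences are proved by testing inequalities on join-irreducibles, through the adjunction
`q ≤ φ x ↔ q^φ ≤ x` for `q ∈ Ji(E)`. The witnesses for the converse directions come from two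
greatest elements, both available because the relevant sets are closed under `⊔`: for `p ∈ Ji(D)`
the largest `b` with `p ≰ b`, which satisfies `p → b = b`, and for `b ∈ E` the largest `c` with
`φ c ≤ b`. If `p ≤ q^φ` had no lift below `q`, every `x ∈ Ji(E)` below `φ p ∧ q` would have
`x^φ < p`, so `φ p ∧ q ≤ φ b` and `q ≤ φ (p → b)`, forcing `p ≤ b`; dually for closedness.
-/

theorem le_of_forall_supIrred_le_imp_le {α : Type*} [SemilatticeSup α] [OrderBot α]
    [WellFoundedLT α] {a b : α} (h : ∀ p, SupIrred p → p ≤ a → p ≤ b) : a ≤ b := by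
  obtain ⟨s, rfl, hs⟩ := exists_supIrred_decomposition a
  exact Finset.sup_le fun p hp => h p (hs hp) (Finset.le_sup (f := id) hp)

theorem SupClosed.exists_isGreatest {α : Type*} [SemilatticeSup α] [Finite α] {s : Set α}
    (hs : SupClosed s) (hne : s.Nonempty) : ∃ a, IsGreatest s a := by
  obtain ⟨t, rfl⟩ := s.toFinite.exists_finset_coe
  rw [Finset.coe_nonempty] at hne
  exact ⟨t.sup' hne id, hs.finsetSup'_mem hne fun _ => id, fun _ => Finset.le_sup' id⟩

theorem SupPrime.exists_isGreatest_not_le {α : Type*} [SemilatticeSup α] [Finite α] {p : α}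
    (hp : SupPrime p) : ∃ b, IsGreatest {y | ¬p ≤ y} b := by
  obtain ⟨b, hb⟩ := not_isMin_iff.1 hp.1
  exact SupClosed.exists_isGreatest (fun _ hx _ hy h => (hp.le_sup.1 h).elim hx hy) ⟨b, hb.not_ge⟩

theorem isGreatest_inf_le_of_isGreatest_not_le {α : Type*} [Lattice α] {p b : α}
    (hb : IsGreatest {y | ¬p ≤ y} b) : IsGreatest {w | p ⊓ w ≤ b} b := by
  refine ⟨inf_le_right, fun w hw => hb.2 fun hpw => hb.1 ?_⟩
  exact (le_inf le_rfl hpw).trans hw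

theorem LatticeHom.exists_isGreatest_apply_le {D E : Type*} [Lattice D] [OrderBot D] [Finite D]
    [Lattice E] [OrderBot E] (f : LatticeHom D E) (hf : f ⊥ = ⊥) (b : E) :
    ∃ c, IsGreatest {x | f x ≤ b} c :=
  SupClosed.exists_isGreatest (fun x hx y hy => (map_sup f x y).trans_le (sup_le hx hy))
    ⟨⊥, hf.trans_le bot_le⟩

section Conditions

variable {D E : Type*}

def IsBirkhoffDual [Preorder D] [SemilatticeSup E] (f : D → E) (dual : E → D) : Prop :=
  ∀ q : E, SupIrred q → IsLeast {x : D | q ≤ f x} (dual q)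

def PreservesHImp [Lattice D] [Lattice E] (f : D → E) : Prop :=
  ∀ x y z : D, IsGreatest {w : D | x ⊓ w ≤ y} z → IsGreatest {w : E | f x ⊓ w ≤ f y} (f z)

def IsClosedHom [Lattice D] [Lattice E] (f : D → E) : Prop :=
  ∀ a₀ a₁ : D, ∀ b : E, f a₀ ≤ f a₁ ⊔ b → ∃ x : D, a₀ ≤ a₁ ⊔ x ∧ f x ≤ b

/- Since a Birkhoff dual is monotone, these say that on join-irreducibles it maps the principal
down-set (resp. up-set) of each `q` onto that of its image: the p-morphism conditions. -/
def HasLiftsBelow [SemilatticeSup D] [SemilatticeSup E] (dual : E → D) : Prop :=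
  ∀ p : D, ∀ q : E, SupIrred p → SupIrred q → p ≤ dual q →
    ∃ x : E, SupIrred x ∧ x ≤ q ∧ dual x = p

def HasLiftsAbove [SemilatticeSup D] [SemilatticeSup E] (dual : E → D) : Prop :=
  ∀ p : D, ∀ q : E, SupIrred p → SupIrred q → dual q ≤ p →
    ∃ x : E, SupIrred x ∧ q ≤ x ∧ dual x = p

end Conditions

theorem IsBirkhoffDual.le_apply_iff {D E F : Type*} [Preorder D] [SemilatticeSup E]
    [FunLike F D E] [OrderHomClass F D E] {f : F} {dual : E → D} (h : IsBirkhoffDual f dual)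
    {q : E} (hq : SupIrred q) {x : D} : q ≤ f x ↔ dual q ≤ x :=
  ⟨fun hqx => (h q hq).2 hqx, fun hx => (h q hq).1.trans (OrderHomClass.mono f hx)⟩

namespace IsBirkhoffDual

variable {D E : Type*}

theorem hasLiftsBelow_of_preservesHImp [DistribLattice D] [Finite D] [Lattice E] [OrderBot E]
    [Finite E] {f : LatticeHom D E} {dual : E → D}
    (h : IsBirkhoffDual f dual) (hf : PreservesHImp f) :
    HasLiftsBelow dual := by
  intro p q hp hq hpq
  by_contra! hno
  obtain ⟨b, hb⟩ := hp.supPrime.exists_isGreatest_not_le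
  have hpb : ¬p ≤ b := hb.1
  have hle_fb : ∀ x, SupIrred x → x ≤ f p → x ≤ q → x ≤ f b := by
    intro x hx hxp hxq
    refine (h.le_apply_iff hx).2 (hb.2 fun hpx => hno x hx hxq (le_antisymm ?_ hpx))
    exact (h.le_apply_iff hx).1 hxp
  have hqb : q ≤ f b := by
    refine (hf p b b (isGreatest_inf_le_of_isGreatest_not_le hb)).2 ?_
    exact le_of_forall_supIrred_le_imp_le fun x hx hxpq =>
      hle_fb x hx (hxpq.trans inf_le_left) (hxpq.trans inf_le_right)
  exact hpb (hpq.trans ((h.le_apply_iff hq).1 hqb))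

theorem preservesHImp_of_hasLiftsBelow [Lattice D] [OrderBot D] [Finite D] [Lattice E]
    [OrderBot E] [Finite E] {f : LatticeHom D E} {dual : E → D}
    (h : IsBirkhoffDual f dual) (hf : HasLiftsBelow dual) :
    PreservesHImp f := by
  intro x y z hz
  have hxz : f x ⊓ f z ≤ f y := by
    rw [← map_inf]
    exact OrderHomClass.mono f hz.1
  refine ⟨hxz, fun w hw => ?_⟩
  refine le_of_forall_supIrred_le_imp_le fun q hq hqw => (h.le_apply_iff hq).2 (hz.2 ?_)
  refine le_of_forall_supIrred_le_imp_le fun p hp hpxq => ?_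
  obtain ⟨r, hr, hrq, rfl⟩ := hf p q hp hq (hpxq.trans inf_le_right)
  have hrx : r ≤ f x := (h.le_apply_iff hr).2 (hpxq.trans inf_le_left)
  exact (h.le_apply_iff hr).1 ((le_inf hrx (hrq.trans hqw)).trans hw)

theorem hasLiftsAbove_of_isClosedHom [DistribLattice D] [Finite D] [DistribLattice E]
    [OrderBot E] [Finite E] {f : LatticeHom D E} {dual : E → D}
    (h : IsBirkhoffDual f dual) (hf : IsClosedHom f) :
    HasLiftsAbove dual := by
  intro p q hp hq hqp
  by_contra! hno
  obtain ⟨b, hb⟩ := hp.supPrime.exists_isGreatest_not_le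
  obtain ⟨c, hc⟩ := hq.supPrime.exists_isGreatest_not_le
  have hfp : f p ≤ f b ⊔ c := by
    refine le_of_forall_supIrred_le_imp_le fun x hx hxp => ?_
    by_cases hqx : q ≤ x
    · refine le_sup_of_le_left ((h.le_apply_iff hx).2 (hb.2 fun hpx => hno x hx hqx ?_))
      exact le_antisymm ((h.le_apply_iff hx).1 hxp) hpx
    · exact le_sup_of_le_right (hc.2 hqx)
  obtain ⟨a, hpba, hfa⟩ := hf p b c hfp
  have hpa : p ≤ a := (hp.supPrime.le_sup.1 hpba).resolve_left hb.1
  exact hc.1 ((((h.le_apply_iff hq).2 hqp).trans (OrderHomClass.mono f hpa)).trans hfa)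

theorem isClosedHom_of_hasLiftsAbove [Lattice D] [OrderBot D] [Finite D] [DistribLattice E]
    [OrderBot E] [Finite E] {f : LatticeHom D E} {dual : E → D}
    (h : IsBirkhoffDual f dual) (hf0 : f ⊥ = ⊥)
    (hf : HasLiftsAbove dual) : IsClosedHom f := by
  intro a₀ a₁ b hab
  obtain ⟨c, hc⟩ := f.exists_isGreatest_apply_le hf0 b
  refine ⟨c, le_of_forall_supIrred_le_imp_le fun p hp hpa₀ => ?_, hc.1⟩
  by_cases hpa₁ : p ≤ a₁
  · exact le_sup_of_le_left hpa₁
  refine le_sup_of_le_right (hc.2 (le_of_forall_supIrred_le_imp_le fun q hq hqp => ?_))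
  obtain ⟨x, hx, hqx, hxp⟩ := hf p q hp hq ((h.le_apply_iff hq).1 hqp)
  have hxa : x ≤ f a₁ ⊔ b :=
    ((h.le_apply_iff hx).2 hxp.le).trans ((OrderHomClass.mono f hpa₀).trans hab)
  refine hqx.trans ((hx.supPrime.le_sup.1 hxa).resolve_left fun hxa₁ => hpa₁ ?_)
  exact hxp ▸ (h.le_apply_iff hx).1 hxa₁

end IsBirkhoffDual

theorem stmt19_general {D E : Type*} [DistribLattice D] [BoundedOrder D] [Finite D]
    [DistribLattice E] [BoundedOrder E] [Finite E]
    (φ : D → E)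
    (hφ : ∀ x y : D, φ (x ⊔ y) = φ x ⊔ φ y ∧ φ (x ⊓ y) = φ x ⊓ φ y)
    (hφ0 : φ ⊥ = ⊥)
    (dual : E → D) (hdual : ∀ q : E, SupIrred q → IsLeast {x : D | q ≤ φ x} (dual q)) :
    ((∀ x y z : D, IsGreatest {w : D | x ⊓ w ≤ y} z →
        IsGreatest {w : E | φ x ⊓ w ≤ φ y} (φ z)) ↔
      (∀ p : D, ∀ q : E, SupIrred p → SupIrred q → p ≤ dual q →
        ∃ x : E, SupIrred x ∧ x ≤ q ∧ dual x = p)) ∧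
    ((∀ a₀ a₁ : D, ∀ b : E, φ a₀ ≤ φ a₁ ⊔ b → ∃ x : D, a₀ ≤ a₁ ⊔ x ∧ φ x ≤ b) ↔
      (∀ p : D, ∀ q : E, SupIrred p → SupIrred q → dual q ≤ p →
        ∃ x : E, SupIrred x ∧ q ≤ x ∧ dual x = p)) := by
  let f : LatticeHom D E :=
    { toFun := φ, map_sup' := fun x y => (hφ x y).1, map_inf' := fun x y => (hφ x y).2 }
  have h : IsBirkhoffDual f dual := hdual
  exact ⟨⟨h.hasLiftsBelow_of_preservesHImp, h.preservesHImp_of_hasLiftsBelow⟩,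
    ⟨h.hasLiftsAbove_of_isClosedHom, h.isClosedHom_of_hasLiftsAbove hφ0⟩⟩

/-- Birkhoff-dual characterizations, for a `0,1`-lattice homomorphism
`φ : D → E` between finite distributive lattices, of (1) being a homomorphism of Heyting
algebras (preserving relative pseudocomplements), and (2) being closed.
Here `dual q = q^φ = min {x : q ≤ φ x}` is the Birkhoff dual of `φ`. -/
theorem stmt19 {D E : Type*} [DistribLattice D] [BoundedOrder D] [Finite D]
    [DistribLattice E] [BoundedOrder E] [Finite E]
    (φ : D → E)
    (hφ : ∀ x y : D, φ (x ⊔ y) = φ x ⊔ φ y ∧ φ (x ⊓ y) = φ x ⊓ φ y)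
    (hφ0 : φ ⊥ = ⊥) (hφ1 : φ ⊤ = ⊤)
    (dual : E → D) (hdual : ∀ q : E, SupIrred q → IsLeast {x : D | q ≤ φ x} (dual q)) :
    ((∀ x y z : D, IsGreatest {w : D | x ⊓ w ≤ y} z →
        IsGreatest {w : E | φ x ⊓ w ≤ φ y} (φ z)) ↔
      (∀ p : D, ∀ q : E, SupIrred p → SupIrred q → p ≤ dual q →
        ∃ x : E, SupIrred x ∧ x ≤ q ∧ dual x = p)) ∧
    ((∀ a₀ a₁ : D, ∀ b : E, φ a₀ ≤ φ a₁ ⊔ b → ∃ x : D, a₀ ≤ a₁ ⊔ x ∧ φ x ≤ b) ↔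
      (∀ p : D, ∀ q : E, SupIrred p → SupIrred q → dual q ≤ p →
        ∃ x : E, SupIrred x ∧ q ≤ x ∧ dual x = p)) :=
  stmt19_general φ hφ hφ0 dual hdual
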